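/- Let T be a finite rooted tree with a friendly labeling function L : G → 𝓛, and let e be an interior edge of T. If λ⁻ is a consistent labeling of T_{e,−} and λ⁺ is a consistent labeling of T_{e,+} with λ⁻(e) = λ⁺(e), then the labeling λ of T whose restriction to the edges of T_{e,−} equals λ⁻ and whose restriction to the edges of T_{e,+} equals λ⁺ is a consistent labeling of T, i.e., λ ∈ im(L^T). -/

import Mathlib

open MvPolynomial

attribute [local instance] Classical.propDecidable

/-- The set `Z_m ⊆ G^m` of tuples with `g_1 + ⋯ + g_{m-1} = g_m`. -/
def ZSet (G : Type) [AddCommGroup G] (m : ℕ) : Set (Fin m → G) :=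
  {g | (∑ i ∈ Finset.univ.filter fun i : Fin m => (i : ℕ) < m - 1, g i) =
       ∑ i ∈ Finset.univ.filter fun i : Fin m => ¬ (i : ℕ) < m - 1, g i}

/-- A labeling function `L : G → 𝓛` is `m`-friendly if for every tuple in `Z_m`, every
value with the same label at a coordinate can be realized at that coordinate by another
tuple in `Z_m` with the same label vector. -/
def IsMFriendly {G 𝓛 : Type} [AddCommGroup G] (L : G → 𝓛) (m : ℕ) : Prop :=
  ∀ g ∈ ZSet G m, ∀ i : Fin m, ∀ h : G, L h = L (g i) →
    ∃ g' ∈ ZSet G m, (∀ j, L (g' j) = L (g j)) ∧ g' i = h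

/-- A labeling function is friendly if it is `m`-friendly for all `m ≥ 3`. -/
def Friendly {G 𝓛 : Type} [AddCommGroup G] (L : G → 𝓛) : Prop :=
  ∀ m, 3 ≤ m → IsMFriendly L m

/-- A finite rooted tree, given by a parent function on a finite vertex set. -/
structure PhyloTree where
  V : Type
  fintypeV : Fintype V
  root : V
  parent : V → V
  parent_root : parent root = root
  reaches_root : ∀ v, ∃ n : ℕ, parent^[n] v = root

attribute [instance] PhyloTree.fintypeV

namespace PhyloTree

variable (T : PhyloTree)

/-- A vertex is a leaf if it has no children. -/
def IsLeaf (v : T.V) : Prop := ∀ u, T.parent u = v → u = v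

/-- The type of leaves of `T`. -/
def Leaf : Type := {v : T.V // T.IsLeaf v}

noncomputable instance : Fintype T.Leaf :=
  have : DecidablePred T.IsLeaf := Classical.decPred _
  Subtype.fintype _

/-- `u` is a (weak) descendant of `v`. -/
def Desc (u v : T.V) : Prop := ∃ n : ℕ, T.parent^[n] u = v

/-- The edges of `T` are indexed by its vertices: a vertex `v` indexes the edge from
`parent v` to `v`, and the root indexes the extra pendant root edge `e_r`.
`leavesBelow v` is the set `Λ(e)` of leaves below the edge indexed by `v`. -/
noncomputable def leavesBelow (v : T.V) : Finset T.Leaf :=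
  Finset.univ.filter fun l => T.Desc l.1 v

/-- An edge is interior if its lower endpoint is neither a leaf nor the root
(the latter excluding the pendant root edge). -/
def InteriorEdge (e : T.V) : Prop := ¬ T.IsLeaf e ∧ e ≠ T.root

/-- The edge set of the subtree `T_{e,-}`: the edge `e` together with all edges below it. -/
def Eminus (e : T.V) : Set T.V := {e' | T.Desc e' e}

/-- The edge set of the subtree `T_{e,+}`: the edge `e` together with all edges not in `T_{e,-}`. -/
def Eplus (e : T.V) : Set T.V := {e' | e' = e ∨ ¬ T.Desc e' e}

theorem mem_Eminus_self (e : T.V) : e ∈ T.Eminus e := ⟨0, rfl⟩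

theorem mem_Eplus_self (e : T.V) : e ∈ T.Eplus e := Or.inl rfl

variable {G 𝓛 : Type} [AddCommGroup G] [Fintype G]

/-- `g(e)`: the sum of the group elements at the leaves below the edge `e`. -/
noncomputable def gsum (g : T.Leaf → G) (e : T.V) : G := ∑ l ∈ T.leavesBelow e, g l

/-- The consistent labelings of the subtree with edge set `S`. -/
def consLab (L : G → 𝓛) (S : Set T.V) : Set (↥S → 𝓛) :=
  Set.range fun g : T.Leaf → G => fun e' : ↥S => L (T.gsum g e'.1)

/-- The consistent labelings of the whole tree `T`, i.e. the image of `L^T`. -/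
def consLabFull (L : G → 𝓛) : Set (T.V → 𝓛) :=
  Set.range fun g : T.Leaf → G => fun e : T.V => L (T.gsum g e)

/-- The toric ideal of the subtree with edge set `S` (in Fourier coordinates `q_λ`,
`λ` a consistent labeling): the kernel of the monomial map `q_λ ↦ ∏_e a^{(e)}_{λ(e)}`. -/
noncomputable def toricIdeal (L : G → 𝓛) (S : Set T.V) :
    Ideal (MvPolynomial ↥(T.consLab L S) ℂ) :=
  RingHom.ker (aeval (R := ℂ)
    fun μ : ↥(T.consLab L S) => ∏ e' : ↥S, (X (e', μ.1 e') : MvPolynomial (↥S × 𝓛) ℂ))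

/-- The toric ideal `I_{T,L}` of the tree `T`. -/
noncomputable def toricIdealFull (L : G → 𝓛) :
    Ideal (MvPolynomial ↥(T.consLabFull L) ℂ) :=
  RingHom.ker (aeval (R := ℂ)
    fun μ : ↥(T.consLabFull L) => ∏ e : T.V, (X (e, μ.1 e) : MvPolynomial (T.V × 𝓛) ℂ))

/-- Glue a labeling of `T_{e,-}` and a labeling of `T_{e,+}` into a labeling of `T`. -/
noncomputable def glue (e : T.V) (μ : ↥(T.Eminus e) → 𝓛) (ν : ↥(T.Eplus e) → 𝓛) :
    T.V → 𝓛 :=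
  fun e' => if h : T.Desc e' e then μ ⟨e', h⟩ else ν ⟨e', Or.inr h⟩

/-- `mix e λ₁ λ₂` agrees with `λ₁` on `T_{e,-}` and with `λ₂` on the rest of `T`. -/
noncomputable def mix (e : T.V) (f g : T.V → 𝓛) : T.V → 𝓛 :=
  fun e' => if T.Desc e' e then f e' else g e'

end PhyloTree

/-!
Realize `λ⁻` by leaf values `gm` and `λ⁺` by leaf values `gp`. As `L (gm(e)) = L (gp(e))`,
friendliness, applied at a vertex to the tuple (sums at its children, their total), changes the
total to any value with the same label while keeping the labels of the children. Pushing this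
down the tree, we change `gm` below `e` so that every label in `T_{e,-}` is kept and `g(e)`
becomes `gp(e)`. Now take these values at the leaves below `e` and `gp` elsewhere: an edge of
`T_{e,+}` other than `e` lies above either none or all of the leaves below `e`, and in the latter
case their total is `gp(e)` either way.
-/

open Finset

section Friendly

variable {G 𝓛 : Type} [AddCommGroup G] {L : G → 𝓛}

theorem mem_ZSet_succ_iff {k : ℕ} (f : Fin (k + 1) → G) :
    f ∈ ZSet G (k + 1) ↔ ∑ i : Fin k, f i.castSucc = f (Fin.last k) := by
  simp [ZSet, sum_filter, Fin.sum_univ_castSucc, fun i : Fin k => i.isLt.not_ge]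

theorem Friendly.exists_fin_sum_eq (hL : Friendly L) {k : ℕ} (hk : 2 ≤ k) (x : Fin k → G)
    {h : G} (hh : L h = L (∑ i, x i)) :
    ∃ y : Fin k → G, (∀ i, L (y i) = L (x i)) ∧ ∑ i, y i = h := by
  have hx : Fin.snoc x (∑ i, x i) ∈ ZSet G (k + 1) := by simp [mem_ZSet_succ_iff]
  obtain ⟨y, hy, hlab, hlast⟩ := hL (k + 1) (by omega) _ hx (Fin.last k) h (by simpa using hh)
  refine ⟨fun i => y i.castSucc, fun i => by simpa using hlab i.castSucc, ?_⟩
  rw [(mem_ZSet_succ_iff y).mp hy, hlast]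

theorem Friendly.exists_sum_eq (hL : Friendly L) {α : Type*} {s : Finset α} (hs : s.Nonempty)
    (x : α → G) {h : G} (hh : L h = L (∑ a ∈ s, x a)) :
    ∃ y : α → G, (∀ a ∈ s, L (y a) = L (x a)) ∧ ∑ a ∈ s, y a = h := by
  obtain hs1 | hs2 := Nat.eq_or_lt_of_le hs.card_pos
  · obtain ⟨a, rfl⟩ := card_eq_one.mp hs1.symm
    exact ⟨fun _ => h, by simpa using hh, by simp⟩
  · classical
    let e := s.equivFin
    have hsum (f : α → G) : ∑ i, f (e.symm i) = ∑ a ∈ s, f a := by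
      rw [← sum_coe_sort s, e.symm.sum_comp (fun a => f a)]
    obtain ⟨y, hlab, hy⟩ := hL.exists_fin_sum_eq hs2 (fun i => x (e.symm i)) (h := h) (by rwa [hsum])
    refine ⟨fun a => if ha : a ∈ s then y (e ⟨a, ha⟩) else 0, fun a ha => ?_, ?_⟩
    · simpa [ha] using hlab (e ⟨a, ha⟩)
    · rw [← hsum, ← hy]
      simp

end Friendly

namespace PhyloTree

variable {T : PhyloTree}

theorem Desc.refl (v : T.V) : T.Desc v v := ⟨0, rfl⟩

theorem Desc.trans {a b c : T.V} (hab : T.Desc a b) (hbc : T.Desc b c) : T.Desc a c := by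
  obtain ⟨n, rfl⟩ := hab
  obtain ⟨m, rfl⟩ := hbc
  exact ⟨m + n, Function.iterate_add_apply _ m n a⟩

theorem desc_parent (u : T.V) : T.Desc u (T.parent u) := ⟨1, rfl⟩

theorem iterate_parent_root (k : ℕ) : T.parent^[k] T.root = T.root :=
  Function.iterate_fixed T.parent_root k

/-- A cycle of parents through `u` can only sit at the root, since `u` reaches the fixed point
`T.root`. -/
theorem Desc.antisymm {u v : T.V} (huv : T.Desc u v) (hvu : T.Desc v u) : u = v := by
  obtain ⟨n, hn⟩ := huv
  obtain ⟨m, hm⟩ := hvu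
  obtain rfl | hn0 := Nat.eq_zero_or_pos n
  · exact hn
  have hper : Function.IsPeriodicPt T.parent (m + n) u := by
    rw [Function.IsPeriodicPt, Function.IsFixedPt, Function.iterate_add_apply, hn, hm]
  obtain ⟨N, hN⟩ := T.reaches_root u
  have hu : u = T.root :=
    calc u = T.parent^[(m + n) * N] u := (hper.mul_const N).symm
      _ = T.parent^[(m + n) * N - N] (T.parent^[N] u) := by
        rw [← Function.iterate_add_apply, Nat.sub_add_cancel (Nat.le_mul_of_pos_left N (by omega))]
      _ = T.root := by rw [hN, iterate_parent_root]
  subst hu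
  rw [← hn, iterate_parent_root]

theorem Desc.parent_of_ne {u v : T.V} (h : T.Desc u v) (hne : u ≠ v) :
    T.Desc (T.parent u) v := by
  obtain ⟨_ | n, hn⟩ := h
  · exact absurd hn hne
  · exact ⟨n, hn⟩

theorem Desc.total_of_desc {l u v : T.V} (hu : T.Desc l u) (hv : T.Desc l v) :
    T.Desc u v ∨ T.Desc v u := by
  obtain ⟨n, rfl⟩ := hu
  obtain ⟨m, rfl⟩ := hv
  rcases le_total n m with h | h
  · exact Or.inl ⟨m - n, by rw [← Function.iterate_add_apply, Nat.sub_add_cancel h]⟩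
  · exact Or.inr ⟨n - m, by rw [← Function.iterate_add_apply, Nat.sub_add_cancel h]⟩

variable (T) in
noncomputable def children (v : T.V) : Finset T.V :=
  univ.filter fun c => T.parent c = v ∧ c ≠ v

theorem mem_children {c v : T.V} : c ∈ T.children v ↔ T.parent c = v ∧ c ≠ v := by
  simp [children]

theorem Desc.of_mem_children {c v : T.V} (hc : c ∈ T.children v) : T.Desc c v :=
  mem_children.mp hc |>.1 ▸ desc_parent c

theorem nonempty_children {v : T.V} (hv : ¬ T.IsLeaf v) : (T.children v).Nonempty := by
  simp only [IsLeaf, not_forall] at hv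
  obtain ⟨u, hu, hne⟩ := hv
  exact ⟨u, mem_children.mpr ⟨hu, hne⟩⟩

theorem Desc.exists_mem_children {u v : T.V} (h : T.Desc u v) (hne : u ≠ v) :
    ∃ c ∈ T.children v, T.Desc u c := by
  obtain ⟨n, hn⟩ := h
  induction n generalizing u with
  | zero => exact absurd hn hne
  | succ n ih =>
    by_cases hpu : T.parent u = v
    · exact ⟨u, mem_children.mpr ⟨hpu, hne⟩, Desc.refl u⟩
    · obtain ⟨c, hc, hpuc⟩ := ih hpu hn
      exact ⟨c, hc, (desc_parent u).trans hpuc⟩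

theorem Desc.eq_of_isLeaf {u v : T.V} (h : T.Desc u v) (hv : T.IsLeaf v) : u = v := by
  by_contra hne
  obtain ⟨c, hc, -⟩ := h.exists_mem_children hne
  exact (mem_children.mp hc).2 (hv c (mem_children.mp hc).1)

theorem eq_of_mem_children_of_desc {c c' u v : T.V} (hc : c ∈ T.children v)
    (hc' : c' ∈ T.children v) (h : T.Desc u c) (h' : T.Desc u c') : c = c' := by
  wlog hcc' : T.Desc c c' generalizing c c'
  · exact (this hc' hc h' h ((h.total_of_desc h').resolve_left hcc')).symm
  by_contra hne
  have hvc' : T.Desc v c' := mem_children.mp hc |>.1 ▸ hcc'.parent_of_ne hne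
  exact (mem_children.mp hc').2 (Desc.of_mem_children hc' |>.antisymm hvc')

theorem wellFounded_mem_children : WellFounded fun c v => c ∈ T.children v := by
  have : IsTrans T.V fun u v => T.Desc u v ∧ u ≠ v :=
    ⟨fun a b c hab hbc => ⟨hab.1.trans hbc.1, fun hac => hab.2 (hab.1.antisymm (hac ▸ hbc.1))⟩⟩
  have : Std.Irrefl fun u v : T.V => T.Desc u v ∧ u ≠ v := ⟨fun a h => h.2 rfl⟩
  exact Subrelation.wf (r := fun u v => T.Desc u v ∧ u ≠ v)
    (fun hc => ⟨Desc.of_mem_children hc, (mem_children.mp hc).2⟩)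
    (Finite.wellFounded_of_trans_of_irrefl _)

theorem mem_leavesBelow {l : T.Leaf} {v : T.V} : l ∈ T.leavesBelow v ↔ T.Desc l.1 v := by
  simp [leavesBelow]

theorem leavesBelow_mono {u v : T.V} (h : T.Desc u v) : T.leavesBelow u ⊆ T.leavesBelow v :=
  fun _ hl => (mem_leavesBelow.mp hl).trans h |> mem_leavesBelow.mpr

theorem disjoint_leavesBelow {u v : T.V} (huv : ¬ T.Desc u v) (hvu : ¬ T.Desc v u) :
    Disjoint (T.leavesBelow u) (T.leavesBelow v) :=
  disjoint_left.mpr fun _ hu hv =>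
    ((mem_leavesBelow.mp hu).total_of_desc (mem_leavesBelow.mp hv)).elim huv hvu

theorem leavesBelow_eq_biUnion_children {v : T.V} (hv : ¬ T.IsLeaf v) :
    T.leavesBelow v = (T.children v).biUnion T.leavesBelow := by
  ext l
  simp only [mem_biUnion, mem_leavesBelow]
  refine ⟨fun h => h.exists_mem_children fun hlv => hv (hlv ▸ l.2), ?_⟩
  rintro ⟨c, hc, hlc⟩
  exact hlc.trans (Desc.of_mem_children hc)

variable {G : Type} [AddCommGroup G]

theorem gsum_of_isLeaf (g : T.Leaf → G) {v : T.V} (hv : T.IsLeaf v) :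
    T.gsum g v = g ⟨v, hv⟩ := by
  refine sum_eq_single_of_mem _ (mem_leavesBelow.mpr (Desc.refl v)) fun l hl hne => ?_
  exact absurd (Subtype.ext ((mem_leavesBelow.mp hl).eq_of_isLeaf hv)) hne

theorem gsum_eq_sum_children (g : T.Leaf → G) {v : T.V} (hv : ¬ T.IsLeaf v) :
    T.gsum g v = ∑ c ∈ T.children v, T.gsum g c := by
  rw [gsum, leavesBelow_eq_biUnion_children hv, sum_biUnion fun c hc c' hc' hne => ?_]
  · rfl
  refine disjoint_left.mpr fun l hl hl' => hne ?_
  exact eq_of_mem_children_of_desc hc hc' (mem_leavesBelow.mp hl) (mem_leavesBelow.mp hl')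

theorem gsum_congr {g g' : T.Leaf → G} {v : T.V} (h : ∀ l : T.Leaf, T.Desc l.1 v → g l = g' l) :
    T.gsum g v = T.gsum g' v :=
  sum_congr rfl fun l hl => h l (mem_leavesBelow.mp hl)

theorem gsum_eq_of_forall_not_desc {g g' : T.Leaf → G} {e u : T.V}
    (hout : ∀ l : T.Leaf, ¬ T.Desc l.1 e → g l = g' l) (he : T.gsum g e = T.gsum g' e)
    (hu : ¬ T.Desc u e) : T.gsum g u = T.gsum g' u := by
  by_cases heu : T.Desc e u
  · rw [gsum, gsum, ← sum_sdiff (leavesBelow_mono heu), ← sum_sdiff (leavesBelow_mono heu)]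
    refine congrArg₂ (· + ·) (sum_congr rfl fun l hl => hout l ?_) he
    exact fun hle => (mem_sdiff.mp hl).2 (mem_leavesBelow.mpr hle)
  · refine gsum_congr fun l hlu => hout l fun hle => ?_
    exact disjoint_left.mp (disjoint_leavesBelow hu heu) (mem_leavesBelow.mpr hlu)
      (mem_leavesBelow.mpr hle)

theorem exists_gsum_eq_of_friendly {𝓛 : Type} {L : G → 𝓛} (hL : Friendly L) (g : T.Leaf → G)
    {v : T.V} {h : G} (hh : L h = L (T.gsum g v)) :
    ∃ g' : T.Leaf → G, T.gsum g' v = h ∧ ∀ u, T.Desc u v → L (T.gsum g' u) = L (T.gsum g u) := by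
  induction v using T.wellFounded_mem_children.induction generalizing h with
  | _ v ih =>
    by_cases hv : T.IsLeaf v
    · refine ⟨fun _ => h, gsum_of_isLeaf _ hv, fun u hu => ?_⟩
      rw [hu.eq_of_isLeaf hv, gsum_of_isLeaf _ hv]
      exact hh
    obtain ⟨t, ht, ht_sum⟩ := hL.exists_sum_eq (T.nonempty_children hv) (T.gsum g) (h := h)
      (by rwa [← gsum_eq_sum_children g hv])
    choose! gc hgc hgc_lab using fun c hc => ih c hc (ht c hc)
    -- children have disjoint subtrees, so below `c` only the summand of `c` survives
    set g' : T.Leaf → G := fun l => ∑ c ∈ T.children v, if T.Desc l.1 c then gc c l else 0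
    have hg'_below {c u : T.V} (hc : c ∈ T.children v) (huc : T.Desc u c) :
        T.gsum g' u = T.gsum (gc c) u := by
      refine gsum_congr fun l hlu => ?_
      have hlc := hlu.trans huc
      refine (sum_eq_single_of_mem c hc fun c' hc' hne => if_neg fun hlc' => hne ?_).trans
        (if_pos hlc)
      exact eq_of_mem_children_of_desc hc' hc hlc' hlc
    have hg'v : T.gsum g' v = h := by
      rw [gsum_eq_sum_children _ hv, ← ht_sum]
      exact sum_congr rfl fun c hc => (hg'_below hc (Desc.refl c)).trans (hgc c hc)
    refine ⟨g', hg'v, fun u hu => ?_⟩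
    obtain rfl | hne := eq_or_ne u v
    · rwa [hg'v]
    obtain ⟨c, hc, huc⟩ := hu.exists_mem_children hne
    rw [hg'_below hc huc]
    exact hgc_lab c hc u huc

end PhyloTree

theorem glue_consistent_general (T : PhyloTree) {G 𝓛 : Type} [AddCommGroup G]
    (L : G → 𝓛) (hL : Friendly L) (e : T.V)
    (lm : ↥(T.Eminus e) → 𝓛) (hlm : lm ∈ T.consLab L (T.Eminus e))
    (lp : ↥(T.Eplus e) → 𝓛) (hlp : lp ∈ T.consLab L (T.Eplus e))
    (hagree : lm ⟨e, T.mem_Eminus_self e⟩ = lp ⟨e, T.mem_Eplus_self e⟩) :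
    T.glue e lm lp ∈ T.consLabFull L := by
  obtain ⟨gm, rfl⟩ := hlm
  obtain ⟨gp, rfl⟩ := hlp
  obtain ⟨g', hg'e, hg'_lab⟩ := T.exists_gsum_eq_of_friendly hL gm hagree.symm
  refine ⟨fun l => if T.Desc l.1 e then g' l else gp l, funext fun u => ?_⟩
  by_cases hu : T.Desc u e
  · simp only [PhyloTree.glue, dif_pos hu]
    rw [← hg'_lab u hu]
    exact congrArg L (PhyloTree.gsum_congr fun l hlu => if_pos (hlu.trans hu))
  · simp only [PhyloTree.glue, dif_neg hu]
    refine congrArg L (PhyloTree.gsum_eq_of_forall_not_desc (fun l hle => if_neg hle) ?_ hu)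
    rw [← hg'e]
    exact PhyloTree.gsum_congr fun l hle => if_pos hle

/-- **Lemma (gluing of consistent labelings).** For a friendly labeling `L` and an interior
edge `e` of `T`, consistent labelings of `T_{e,-}` and `T_{e,+}` agreeing on `e` glue to a
consistent labeling of `T`. -/
theorem glue_consistent (T : PhyloTree) {G 𝓛 : Type} [AddCommGroup G] [Fintype G]
    (L : G → 𝓛) (hL : Friendly L) (e : T.V) (he : T.InteriorEdge e)
    (lm : ↥(T.Eminus e) → 𝓛) (hlm : lm ∈ T.consLab L (T.Eminus e))
    (lp : ↥(T.Eplus e) → 𝓛) (hlp : lp ∈ T.consLab L (T.Eplus e))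
    (hagree : lm ⟨e, T.mem_Eminus_self e⟩ = lp ⟨e, T.mem_Eplus_self e⟩) :
    T.glue e lm lp ∈ T.consLabFull L :=
  glue_consistent_general T L hL e lm hlm lp hlp hagree
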